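/- Conversely, if an assembly A (with partial orientation data) admits at least one non-conflicting realization, then every scaffold participates in at most two assembly points of A, and any two assembly points sharing a scaffold are non-conflicting or semi-conflicting (i.e., not every pair of their realizations is conflicting). -/

import Mathlib

/-- An assembly point: two scaffolds with partial orientation data
(`none` = unoriented, `some b` = oriented, `true` = forward). -/
structure APoint (S : Type) where
  s1 : S
  s2 : S
  o1 : Option Bool
  o2 : Option Bool
deriving DecidableEq

/-- A global orientation `σ` extends (is consistent with) the partial data of `p`. -/
def APoint.extends' {S : Type} (σ : S → Bool) (p : APoint S) : Prop :=
  (∀ b, p.o1 = some b → σ p.s1 = b) ∧ (∀ b, p.o2 = some b → σ p.s2 = b)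

/-- The extremity of its left scaffold used by a point realized via `σ`
(head `(s, true)` if `s` is forward). -/
def APoint.usedL {S : Type} (σ : S → Bool) (p : APoint S) : S × Bool := (p.s1, σ p.s1)

/-- The extremity of its right scaffold used by a point realized via `σ`
(tail `(s, false)` if `s` is forward). -/
def APoint.usedR {S : Type} (σ : S → Bool) (p : APoint S) : S × Bool := (p.s2, !σ p.s2)

/-- Two realized points use disjoint sets of extremities (are non-conflicting). -/
def APoint.disj {S : Type} (τ τ' : S → Bool) (p q : APoint S) : Prop :=
  p.usedL τ ≠ q.usedL τ' ∧ p.usedL τ ≠ q.usedR τ' ∧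
  p.usedR τ ≠ q.usedL τ' ∧ p.usedR τ ≠ q.usedR τ'

/-- `σ` is a non-conflicting realization of the assembly `A`: it extends the partial
orientation data of every point, and every scaffold extremity is used at most once. -/
def NCR {S : Type} (A : Finset (APoint S)) (σ : S → Bool) : Prop :=
  (∀ p ∈ A, p.extends' σ) ∧
  (∀ p ∈ A, p.usedL σ ≠ p.usedR σ) ∧
  (∀ p ∈ A, ∀ q ∈ A, p ≠ q → APoint.disj σ σ p q)
/-! Under a non-conflicting realization, distinct points involving a scaffold `s` occupy distinct
extremities of `s`, and `s` has only two of them. The realization itself shows that no two points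
of `A` are conflicting. -/

namespace APoint

variable {S : Type} [DecidableEq S]

/-- The end of scaffold `s` (`true` for its head) at which `p` attaches under `σ`, provided `p`
involves `s` at all; when `p.s1 = p.s2 = s` the left attachment is chosen. -/
def sideAt (σ : S → Bool) (s : S) (p : APoint S) : Bool :=
  if p.s1 = s then σ s else !σ s

lemma sideAt_mem_used (σ : S → Bool) {s : S} {p : APoint S} (hp : p.s1 = s ∨ p.s2 = s) :
    (s, p.sideAt σ s) = p.usedL σ ∨ (s, p.sideAt σ s) = p.usedR σ := by
  unfold sideAt usedL usedR
  split_ifs with h1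
  · exact .inl (by rw [h1])
  · exact .inr (by rw [hp.resolve_left h1])

lemma sideAt_ne_of_disj (σ : S → Bool) {s : S} {p q : APoint S}
    (hp : p.s1 = s ∨ p.s2 = s) (hq : q.s1 = s ∨ q.s2 = s) (hpq : disj σ σ p q) :
    p.sideAt σ s ≠ q.sideAt σ s := by
  intro heq
  have hp' := sideAt_mem_used σ hp
  obtain ⟨hLL, hLR, hRL, hRR⟩ := hpq
  rw [heq] at hp'
  rcases hp' with hpe | hpe <;> rcases sideAt_mem_used σ hq with hqe | hqe
  exacts [hLL (hpe.symm.trans hqe), hLR (hpe.symm.trans hqe), hRL (hpe.symm.trans hqe),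
    hRR (hpe.symm.trans hqe)]

end APoint

open APoint in
lemma card_filter_involving_le_two {S : Type} [DecidableEq S] {A : Finset (APoint S)}
    {σ : S → Bool} (hA : ∀ p ∈ A, ∀ q ∈ A, p ≠ q → disj σ σ p q) (s : S) :
    (A.filter (fun p => p.s1 = s ∨ p.s2 = s)).card ≤ 2 := by
  have hinj : Set.InjOn (sideAt σ s) (A.filter (fun p => p.s1 = s ∨ p.s2 = s)) := by
    intro p hp q hq heq
    rw [Finset.coe_filter] at hp hq
    by_contra hne
    exact sideAt_ne_of_disj σ hp.2 hq.2 (hA p hp.1 q hq.1 hne) heq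
  simpa using Finset.card_le_card_of_injOn _ (fun p _ => Finset.mem_univ _) hinj

theorem nonconflicting_realization_necessary_general {S : Type} [DecidableEq S]
    (A : Finset (APoint S)) (σ : S → Bool)
    (h : NCR A σ) :
    (∀ s : S, (A.filter (fun p => p.s1 = s ∨ p.s2 = s)).card ≤ 2) ∧
    (∀ p ∈ A, ∀ q ∈ A, p ≠ q →
      (p.s1 = q.s1 ∨ p.s1 = q.s2 ∨ p.s2 = q.s1 ∨ p.s2 = q.s2) →
      ∃ τ τ' : S → Bool, p.extends' τ ∧ q.extends' τ' ∧ APoint.disj τ τ' p q) := by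
  obtain ⟨hext, -, hdisj⟩ := h
  exact ⟨card_filter_involving_le_two hdisj,
    fun p hp q hq hne _ => ⟨σ, σ, hext p hp, hext q hq, hdisj p hp q hq hne⟩⟩

/-- if an assembly `A` admits a non-conflicting realization, then every
scaffold participates in at most two points of `A`, and any two points sharing a
scaffold have some pair of realizations that is non-conflicting (uses disjoint
extremities), i.e. they are non-conflicting or semi-conflicting. -/
theorem nonconflicting_realization_necessary {S : Type} [Fintype S] [DecidableEq S]
    (A : Finset (APoint S)) (σ : S → Bool)
    (hss : ∀ p ∈ A, p.s1 ≠ p.s2)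
    (h : NCR A σ) :
    (∀ s : S, (A.filter (fun p => p.s1 = s ∨ p.s2 = s)).card ≤ 2) ∧
    (∀ p ∈ A, ∀ q ∈ A, p ≠ q →
      (p.s1 = q.s1 ∨ p.s1 = q.s2 ∨ p.s2 = q.s1 ∨ p.s2 = q.s2) →
      ∃ τ τ' : S → Bool, p.extends' τ ∧ q.extends' τ' ∧ APoint.disj τ τ' p q) :=
  nonconflicting_realization_necessary_general A σ h
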